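/- arXiv:2002.01401 — 3 statements merged into one kernel-verified Lean document; each statement's English description precedes it below -/
import Mathlib

section
/- Let Ω ∪ Ω_I ⊂ ℝ^d and let γ : (Ω∪Ω_I)×(Ω∪Ω_I) → ℝ be a symmetric kernel (γ(x,y)=γ(y,x)). Define the nonlocal operator (L u)(x) = 2∫_{Ω∪Ω_I} (u(y)-u(x)) γ(x,y) dy for x ∈ Ω and (N u)(x) = -2∫_{Ω∪Ω_I} (u(y)-u(x)) γ(x,y) dy for x ∈ Ω_I. Then for all sufficiently regular u, v (e.g. bounded measurable with all integrals absolutely convergent), the nonlocal Green's first identity holds: ∫_{Ω∪Ω_I}∫_{Ω∪Ω_I} (v(y)-v(x))(u(y)-u(x)) γ(x,y) dy dx = -∫_Ω v(x) (L u)(x) dx + ∫_{Ω_I} v(x) (N u)(x) dx. -/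
/-!
Write `F x y = (u y - u x) γ x y`. Symmetry of `γ` makes `F` antisymmetric, so exchanging the
two variables turns `∬ v y F x y` into `-∬ v x F x y`. Hence the energy `∬ (v y - v x) F x y`
equals `-2 ∬ v x F x y = -∫ v (L u)` over all of `Ω ∪ Ω_I`, and splitting this integral along the
disjoint union gives the right-hand side, since `N u = -L u`.
-/

open MeasureTheory

namespace NonlocalGreen

variable {α : Type*} [MeasurableSpace α] {μ : Measure α}

lemma integrable_sub_mul_of_bounded {G : α × α → ℝ} (hG : Integrable G (μ.prod μ))
    {f : α → ℝ} (hf : AEStronglyMeasurable f μ) {M : ℝ} (hM : ∀ x, |f x| ≤ M) :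
    Integrable (fun p => (f p.2 - f p.1) * G p) (μ.prod μ) :=
  hG.bdd_mul (c := M + M) (hf.comp_snd.sub hf.comp_fst) (ae_of_all _ fun _ =>
    (Real.norm_eq_abs _).trans_le ((abs_sub _ _).trans (add_le_add (hM _) (hM _))))

variable [SFinite μ]

lemma integral_prod_snd_mul_of_antisymm {F : α × α → ℝ} (hF : ∀ p, F p.swap = -F p)
    (v : α → ℝ) :
    ∫ p, v p.2 * F p ∂μ.prod μ = -∫ p, v p.1 * F p ∂μ.prod μ := by
  rw [← integral_prod_swap, ← integral_neg]
  simp only [Prod.snd_swap, hF, mul_neg]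

lemma integral_prod_sub_mul_of_antisymm {F : α × α → ℝ} (hF : ∀ p, F p.swap = -F p)
    {v : α → ℝ} (hvF : Integrable (fun p => v p.1 * F p) (μ.prod μ)) :
    ∫ p, (v p.2 - v p.1) * F p ∂μ.prod μ = -2 * ∫ p, v p.1 * F p ∂μ.prod μ := by
  have hvF_swap : Integrable (fun p => v p.2 * F p) (μ.prod μ) :=
    hvF.swap.neg.congr (ae_of_all _ fun _ => by simp [hF])
  simp_rw [sub_mul]
  rw [integral_sub hvF_swap hvF, integral_prod_snd_mul_of_antisymm hF]
  ring

theorem integral_integral_sub_mul_sub_mul_eq {γ : α → α → ℝ} (hγsymm : ∀ x y, γ x y = γ y x)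
    (hγ : Integrable (fun p : α × α => γ p.1 p.2) (μ.prod μ)) {u v : α → ℝ}
    (hu : AEStronglyMeasurable u μ) (hv : AEStronglyMeasurable v μ) {Mu Mv : ℝ}
    (hMu : ∀ x, |u x| ≤ Mu) (hMv : ∀ x, |v x| ≤ Mv) :
    ∫ x, ∫ y, (v y - v x) * (u y - u x) * γ x y ∂μ ∂μ
      = -∫ x, v x * (2 * ∫ y, (u y - u x) * γ x y ∂μ) ∂μ := by
  set F : α × α → ℝ := fun p => (u p.2 - u p.1) * γ p.1 p.2
  have hF_antisymm : ∀ p, F p.swap = -F p := fun p => by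
    simp only [F, Prod.fst_swap, Prod.snd_swap, hγsymm p.2 p.1]
    ring
  have hF : Integrable F (μ.prod μ) := integrable_sub_mul_of_bounded hγ hu hMu
  have hvF : Integrable (fun p => v p.1 * F p) (μ.prod μ) :=
    hF.bdd_mul hv.comp_fst (ae_of_all _ fun p => (Real.norm_eq_abs _).trans_le (hMv p.1))
  calc ∫ x, ∫ y, (v y - v x) * (u y - u x) * γ x y ∂μ ∂μ
      = ∫ p, (v p.2 - v p.1) * F p ∂μ.prod μ := by
        simp_rw [mul_assoc]
        exact integral_integral (integrable_sub_mul_of_bounded hF hv hMv)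
    _ = -2 * ∫ p, v p.1 * F p ∂μ.prod μ := integral_prod_sub_mul_of_antisymm hF_antisymm hvF
    _ = -2 * ∫ x, v x * ∫ y, F (x, y) ∂μ ∂μ := by
        congr 1
        simp_rw [← integral_const_mul]
        exact (integral_integral (f := fun x y => v x * F (x, y)) hvF).symm
    _ = _ := by
        rw [← integral_const_mul, ← integral_neg]
        congr 1 with x
        ring

end NonlocalGreen

theorem nonlocal_green_first_identity_general
    {d : ℕ} (Ω ΩI : Set (EuclideanSpace ℝ (Fin d)))
    (hΩI : MeasurableSet ΩI)
    (hdisj : Disjoint Ω ΩI)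
    (γ : EuclideanSpace ℝ (Fin d) → EuclideanSpace ℝ (Fin d) → ℝ)
    (hγsymm : ∀ x y, γ x y = γ y x)
    (u v : EuclideanSpace ℝ (Fin d) → ℝ)
    (hu : Measurable u) (hv : Measurable v)
    (hub : ∃ M, ∀ x, |u x| ≤ M) (hvb : ∃ M, ∀ x, |v x| ≤ M)
    (hγint : IntegrableOn (fun p : EuclideanSpace ℝ (Fin d) × EuclideanSpace ℝ (Fin d) =>
      γ p.1 p.2) ((Ω ∪ ΩI) ×ˢ (Ω ∪ ΩI))) :
    ∫ x in Ω ∪ ΩI, ∫ y in Ω ∪ ΩI, (v y - v x) * (u y - u x) * γ x y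
      = -(∫ x in Ω, v x * (2 * ∫ y in Ω ∪ ΩI, (u y - u x) * γ x y))
        + ∫ x in ΩI, v x * (-(2 * ∫ y in Ω ∪ ΩI, (u y - u x) * γ x y)) := by
  obtain ⟨Mu, hMu⟩ := hub
  obtain ⟨Mv, hMv⟩ := hvb
  have hγ : Integrable (fun p => γ p.1 p.2)
      ((volume.restrict (Ω ∪ ΩI)).prod (volume.restrict (Ω ∪ ΩI))) := by
    rwa [Measure.prod_restrict, ← Measure.volume_eq_prod]
  have hLu : IntegrableOn (fun x => v x * (2 * ∫ y in Ω ∪ ΩI, (u y - u x) * γ x y)) (Ω ∪ ΩI) := by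
    have hF := NonlocalGreen.integrable_sub_mul_of_bounded hγ hu.aestronglyMeasurable hMu
    exact (hF.integral_prod_left.const_mul 2).bdd_mul hv.aestronglyMeasurable
      (ae_of_all _ fun x => (Real.norm_eq_abs _).trans_le (hMv x))
  rw [NonlocalGreen.integral_integral_sub_mul_sub_mul_eq hγsymm hγ hu.aestronglyMeasurable
      hv.aestronglyMeasurable hMu hMv,
    setIntegral_union hdisj hΩI (hLu.mono_set Set.subset_union_left)
      (hLu.mono_set Set.subset_union_right)]
  simp_rw [mul_neg, integral_neg]
  ring

/-- Nonlocal Green's first identity. -/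
theorem nonlocal_green_first_identity
    {d : ℕ} (Ω ΩI : Set (EuclideanSpace ℝ (Fin d)))
    (hΩ : MeasurableSet Ω) (hΩI : MeasurableSet ΩI)
    (hdisj : Disjoint Ω ΩI)
    (hfin : volume (Ω ∪ ΩI) < ⊤)
    (γ : EuclideanSpace ℝ (Fin d) → EuclideanSpace ℝ (Fin d) → ℝ)
    (hγmeas : Measurable (Function.uncurry γ))
    (hγnonneg : ∀ x y, 0 ≤ γ x y)
    (hγsymm : ∀ x y, γ x y = γ y x)
    (u v : EuclideanSpace ℝ (Fin d) → ℝ)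
    (hu : Measurable u) (hv : Measurable v)
    (hub : ∃ M, ∀ x, |u x| ≤ M) (hvb : ∃ M, ∀ x, |v x| ≤ M)
    (hγint : IntegrableOn (fun p : EuclideanSpace ℝ (Fin d) × EuclideanSpace ℝ (Fin d) =>
      γ p.1 p.2) ((Ω ∪ ΩI) ×ˢ (Ω ∪ ΩI))) :
    ∫ x in Ω ∪ ΩI, ∫ y in Ω ∪ ΩI, (v y - v x) * (u y - u x) * γ x y
      = -(∫ x in Ω, v x * (2 * ∫ y in Ω ∪ ΩI, (u y - u x) * γ x y))
        + ∫ x in ΩI, v x * (-(2 * ∫ y in Ω ∪ ΩI, (u y - u x) * γ x y)) :=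
  nonlocal_green_first_identity_general Ω ΩI hΩI hdisj γ hγsymm u v hu hv hub hvb hγint
end

section
/- With the nonlocal divergence D and its adjoint D* defined via an antisymmetric function α(x,y) and interaction indicator χ as above, and with Θ(x,y) a symmetric (Θ(x,y)=Θ(y,x)) matrix-valued function, one has for every suitable scalar function u and all x: -D(Θ D* u)(x) = 2 ∫_{Ω∪Ω_I} (u(y)-u(x)) γ(x,y) dy, where γ(x,y) := α(x,y) · (Θ(x,y) α(x,y)) χ(x,y). Moreover this kernel γ is symmetric: γ(x,y) = γ(y,x). -/
open MeasureTheory RealInnerProductSpace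

/-! The identity holds already at the level of integrands: by the antisymmetry of `α` and the
symmetry of `Θ` and of `χ`, the flux `ν = Θ D* u` is symmetric, `ν y x = ν x y`, so the
integrand of `D ν` is `2 ⟪ν x y, α x y⟫ χ = -2 (u y - u x) γ x y` (using `χ² = χ`). -/

section NonlocalCalculus

variable {X E : Type*} [NormedAddCommGroup E] [InnerProductSpace ℝ E]

/-- `Θ D* u`, for the interaction function `c` (the indicator `χ` in the theorem). -/
def nonlocalFlux (α : X → X → E) (Θ : X → X → E →L[ℝ] E) (c : X → X → ℝ) (u : X → ℝ)
    (x y : X) : E :=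
  Θ x y ((-(u y - u x) * c x y) • α x y)

def nonlocalKernel (α : X → X → E) (Θ : X → X → E →L[ℝ] E) (c : X → X → ℝ) (x y : X) : ℝ :=
  ⟪α x y, Θ x y (α x y)⟫ * c x y

variable {α : X → X → E} {Θ : X → X → E →L[ℝ] E} {c : X → X → ℝ}

theorem nonlocalKernel_comm (hα : ∀ x y, α y x = -α x y) (hΘ : ∀ x y, Θ x y = Θ y x)
    (hc : ∀ x y, c x y = c y x) (x y : X) :
    nonlocalKernel α Θ c x y = nonlocalKernel α Θ c y x := by
  simp only [nonlocalKernel, hα y x, hΘ y x, hc y x, map_neg, inner_neg_neg]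

theorem nonlocalFlux_comm (hα : ∀ x y, α y x = -α x y) (hΘ : ∀ x y, Θ x y = Θ y x)
    (hc : ∀ x y, c x y = c y x) (u : X → ℝ) (x y : X) :
    nonlocalFlux α Θ c u x y = nonlocalFlux α Θ c u y x := by
  simp only [nonlocalFlux, hα y x, hΘ y x, hc y x, smul_neg, ← neg_smul]
  congr 2
  ring

theorem inner_nonlocalFlux_add_mul (hα : ∀ x y, α y x = -α x y) (hΘ : ∀ x y, Θ x y = Θ y x)
    (hc : ∀ x y, c x y = c y x) (hcc : ∀ x y, c x y * c x y = c x y) (u : X → ℝ) (x y : X) :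
    ⟪nonlocalFlux α Θ c u y x + nonlocalFlux α Θ c u x y, α x y⟫ * c x y
      = -2 * ((u y - u x) * nonlocalKernel α Θ c x y) := by
  rw [← nonlocalFlux_comm hα hΘ hc, nonlocalFlux, nonlocalKernel, map_smul, inner_add_left,
    real_inner_smul_left, real_inner_comm (α x y)]
  linear_combination (-2 * (u y - u x) * ⟪α x y, Θ x y (α x y)⟫) * hcc x y

end NonlocalCalculus

theorem ite_one_zero_mul_self {R : Type*} [MulZeroOneClass R] (p : Prop) [Decidable p] :
    ((if p then (1 : R) else 0) * if p then (1 : R) else 0) = if p then (1 : R) else 0 := by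
  split_ifs <;> simp

theorem nonlocal_composition_kernel_general
    {d : ℕ} (S : Set (EuclideanSpace ℝ (Fin d)))
    (δ : ℝ)
    (α : EuclideanSpace ℝ (Fin d) → EuclideanSpace ℝ (Fin d) → EuclideanSpace ℝ (Fin d))
    (hαanti : ∀ x y, α y x = -α x y)
    (Θ : EuclideanSpace ℝ (Fin d) → EuclideanSpace ℝ (Fin d) →
      (EuclideanSpace ℝ (Fin d) →L[ℝ] EuclideanSpace ℝ (Fin d)))
    (hΘsymm : ∀ x y, Θ x y = Θ y x)
    (u : EuclideanSpace ℝ (Fin d) → ℝ)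
    (γ : EuclideanSpace ℝ (Fin d) → EuclideanSpace ℝ (Fin d) → ℝ)
    (hγdef : ∀ x y, γ x y = ⟪α x y, Θ x y (α x y)⟫ * (if dist x y < δ then (1 : ℝ) else 0))
    (ν : EuclideanSpace ℝ (Fin d) → EuclideanSpace ℝ (Fin d) → EuclideanSpace ℝ (Fin d))
    (hνdef : ∀ x y, ν x y =
      Θ x y (((-(u y - u x)) * (if dist x y < δ then (1 : ℝ) else 0)) • α x y)) :
    (∀ x y, γ x y = γ y x) ∧
    ∀ x, -(∫ y in S, ⟪ν y x + ν x y, α x y⟫ * (if dist x y < δ then (1 : ℝ) else 0))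
      = 2 * ∫ y in S, (u y - u x) * γ x y := by
  set χ : EuclideanSpace ℝ (Fin d) → EuclideanSpace ℝ (Fin d) → ℝ :=
    fun x y => if dist x y < δ then 1 else 0
  have hχ : ∀ x y, χ x y = χ y x := fun x y => by simp only [χ, dist_comm]
  obtain rfl : γ = nonlocalKernel α Θ χ := funext₂ hγdef
  obtain rfl : ν = nonlocalFlux α Θ χ u := funext₂ hνdef
  refine ⟨nonlocalKernel_comm hαanti hΘsymm hχ, fun x => ?_⟩
  change -(∫ y in S, ⟪_, _⟫ * χ x y) = _
  simp_rw [inner_nonlocalFlux_add_mul hαanti hΘsymm hχ (fun x y => ite_one_zero_mul_self _),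
    integral_const_mul]
  ring

/-- The composition `-D(Θ D* u)` equals the nonlocal Laplacian with kernel
`γ(x,y) = α(x,y)·(Θ(x,y)α(x,y)) χ(x,y)`, and this kernel is symmetric. -/
theorem nonlocal_composition_kernel
    {d : ℕ} (S : Set (EuclideanSpace ℝ (Fin d))) (hS : MeasurableSet S)
    (hfin : volume S < ⊤) (δ : ℝ) (hδ : 0 < δ)
    (α : EuclideanSpace ℝ (Fin d) → EuclideanSpace ℝ (Fin d) → EuclideanSpace ℝ (Fin d))
    (hαanti : ∀ x y, α y x = -α x y)
    (Θ : EuclideanSpace ℝ (Fin d) → EuclideanSpace ℝ (Fin d) →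
      (EuclideanSpace ℝ (Fin d) →L[ℝ] EuclideanSpace ℝ (Fin d)))
    (hΘsymm : ∀ x y, Θ x y = Θ y x)
    (u : EuclideanSpace ℝ (Fin d) → ℝ)
    (γ : EuclideanSpace ℝ (Fin d) → EuclideanSpace ℝ (Fin d) → ℝ)
    (hγdef : ∀ x y, γ x y = ⟪α x y, Θ x y (α x y)⟫ * (if dist x y < δ then (1 : ℝ) else 0))
    (ν : EuclideanSpace ℝ (Fin d) → EuclideanSpace ℝ (Fin d) → EuclideanSpace ℝ (Fin d))
    (hνdef : ∀ x y, ν x y =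
      Θ x y (((-(u y - u x)) * (if dist x y < δ then (1 : ℝ) else 0)) • α x y))
    (hint : ∀ x, IntegrableOn (fun y => (u y - u x) * γ x y) S) :
    (∀ x y, γ x y = γ y x) ∧
    ∀ x, -(∫ y in S, ⟪ν y x + ν x y, α x y⟫ * (if dist x y < δ then (1 : ℝ) else 0))
      = 2 * ∫ y in S, (u y - u x) * γ x y :=
  nonlocal_composition_kernel_general S δ α hαanti Θ hΘsymm u γ hγdef ν hνdef
end

section
/- Consider the nonlocal wave equation ρ ∂²_t u = L u on Ω × (0,T] with homogeneous volume constraint u = 0 on Ω_I and γ ≥ 0 symmetric, L as above. Then the total energy E(t) = (1/2)∫_Ω ρ (∂_t u)² dx + (1/2)∫∫_{(Ω∪Ω_I)²} (u(y,t)-u(x,t))² γ(x,y) dy dx is conserved: dE/dt = 0 for all t ∈ (0,T). -/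
/-!
Differentiating under the integral sign, the kinetic energy changes at the rate `∫_Ω ∂ₜu · L u`
and the potential energy at the rate `∫∫ (u(y) - u(x)) (∂ₜu(y) - ∂ₜu(x)) γ(x, y)`. By the nonlocal
Green identity, which rests on the symmetry of `γ`, the latter is `-∫_{Ω ∪ ΩI} ∂ₜu · L u`; since
`u` vanishes on `ΩI` for all times, so does `∂ₜu`, and the two rates cancel.
-/

open MeasureTheory Set Filter Topology Function

/-- The operator `L` of the nonlocal wave equation `ρ ∂²ₜu = L u`. -/
noncomputable def nonlocalOp {X : Type*} [MeasurableSpace X] (μ : Measure X) (γ : X → X → ℝ)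
    (u : X → ℝ) (x : X) : ℝ :=
  2 * ∫ y, (u y - u x) * γ x y ∂μ

theorem hasDerivAt_integral_sq_mul {α : Type*} [MeasurableSpace α] {μ : Measure α}
    {a a' : ℝ → α → ℝ} {g b : α → ℝ} {s : Set ℝ} {t M : ℝ} (hs : s ∈ 𝓝 t)
    (ha : ∀ τ, AEStronglyMeasurable (a τ) μ) (ha' : AEStronglyMeasurable (a' t) μ)
    (hg : Integrable g μ) (hb : Integrable b μ) (ha_bdd : ∀ τ ∈ s, ∀ p, |a τ p| ≤ M)
    (ha'_bdd : ∀ᵐ p ∂μ, ∀ τ ∈ s, |a' τ p * g p| ≤ b p)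
    (hderiv : ∀ᵐ p ∂μ, ∀ τ ∈ s, HasDerivAt (a · p) (a' τ p) τ) :
    HasDerivAt (fun τ => ∫ p, a τ p ^ 2 * g p ∂μ) (∫ p, 2 * a t p * a' t p * g p ∂μ) t := by
  have hint : Integrable (fun p => a t p ^ 2 * g p) μ :=
    hg.bdd_mul ((ha t).pow 2) (c := M ^ 2) <| .of_forall fun p => by
      rw [norm_pow, Real.norm_eq_abs]
      exact pow_le_pow_left₀ (abs_nonneg _) (ha_bdd t (mem_of_mem_nhds hs) p) 2
  refine (hasDerivAt_integral_of_dominated_loc_of_deriv_le hs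
    (.of_forall fun τ => ((ha τ).pow 2).mul hg.1) hint ((((ha t).const_mul 2).mul ha').mul hg.1)
    (F' := fun τ p => 2 * a τ p * a' τ p * g p) (bound := fun p => 2 * M * b p) ?_
    (hb.const_mul _) ?_).2
  · filter_upwards [ha'_bdd] with p hp τ hτ
    have hM : |a τ p| ≤ M := ha_bdd τ hτ p
    rw [Real.norm_eq_abs, show 2 * a τ p * a' τ p * g p = 2 * (a τ p * (a' τ p * g p)) by ring,
      abs_mul, abs_mul, abs_two, ← mul_assoc]
    exact mul_le_mul (by linarith) (hp τ hτ) (abs_nonneg _) (by linarith [abs_nonneg (a τ p)])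
  · filter_upwards [hderiv] with p hp τ hτ
    simpa using ((hp τ hτ).fun_pow 2).mul_const (g p)

section

variable {X : Type*} [MeasurableSpace X] {μ : Measure X} {γ : X → X → ℝ}

theorem abs_nonlocalOp_le {u : X → ℝ} {M : ℝ} {x : X} (hu : ∀ y, |u y| ≤ M)
    (hγ : Integrable (γ x) μ) : |nonlocalOp μ γ u x| ≤ 4 * M * ∫ y, |γ x y| ∂μ := by
  have hpoint : ∀ y, ‖(u y - u x) * γ x y‖ ≤ 2 * M * |γ x y| := fun y => by
    rw [Real.norm_eq_abs, abs_mul]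
    gcongr
    linarith [abs_sub (u y) (u x), hu y, hu x]
  calc |nonlocalOp μ γ u x| = 2 * ‖∫ y, (u y - u x) * γ x y ∂μ‖ := by
        rw [nonlocalOp, abs_mul, abs_two, Real.norm_eq_abs]
    _ ≤ 2 * ∫ y, 2 * M * |γ x y| ∂μ := by
        gcongr
        exact norm_integral_le_of_norm_le (hγ.abs.const_mul _) (.of_forall hpoint)
    _ = 4 * M * ∫ y, |γ x y| ∂μ := by rw [integral_const_mul]; ring

/-- Nonlocal Green's first identity. -/
theorem integral_mul_nonlocalOp [SFinite μ] {u w : X → ℝ} (hγ : ∀ x y, γ x y = γ y x)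
    (hint : Integrable (fun p : X × X => w p.1 * ((u p.2 - u p.1) * γ p.1 p.2)) (μ.prod μ)) :
    ∫ x, w x * nonlocalOp μ γ u x ∂μ =
      -∫ p, (u p.2 - u p.1) * (w p.2 - w p.1) * γ p.1 p.2 ∂μ.prod μ := by
  set f : X × X → ℝ := fun p => w p.1 * ((u p.2 - u p.1) * γ p.1 p.2)
  -- by symmetry of `γ`, swapping `x` and `y` turns `f` into minus the other half of the integrand
  have hswap : ∀ p : X × X, (u p.2 - u p.1) * w p.2 * γ p.1 p.2 = -f p.swap := fun p => by
    simp only [f, Prod.fst_swap, Prod.snd_swap, hγ p.2 p.1]; ring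
  have hint' : Integrable (fun p : X × X => (u p.2 - u p.1) * w p.2 * γ p.1 p.2) (μ.prod μ) :=
    hint.swap.neg.congr (.of_forall fun p => (hswap p).symm)
  calc ∫ x, w x * nonlocalOp μ γ u x ∂μ = 2 * ∫ p, f p ∂μ.prod μ := by
        rw [integral_prod f hint, ← integral_const_mul]
        refine integral_congr_ae (.of_forall fun x => ?_)
        simp only [nonlocalOp, f, integral_const_mul]
        ring
    _ = -(∫ p, (u p.2 - u p.1) * w p.2 * γ p.1 p.2 ∂μ.prod μ - ∫ p, f p ∂μ.prod μ) := by
        simp only [hswap, integral_neg, integral_prod_swap f]; ring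
    _ = _ := by
        rw [← integral_sub hint' hint]
        congr 2 with p
        ring

end

section

variable {X : Type*} [MeasurableSpace X] {μ : Measure X} [SFinite μ] {γ : X → X → ℝ}
  {u v : ℝ → X → ℝ} {s : Set ℝ} {t M N : ℝ}

theorem hasDerivAt_setIntegral_mul_sq {Ω S : Set X} [IsFiniteMeasure (μ.restrict Ω)]
    (hΩ : MeasurableSet Ω) (hΩS : Ω ⊆ S)
    (hγ : Integrable (uncurry γ) ((μ.restrict S).prod (μ.restrict S))) {ρ : ℝ} (hρ : ρ ≠ 0)
    (hs : s ∈ 𝓝 t) (hu : Measurable (u t)) (hv : ∀ τ, Measurable (v τ))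
    (hu_bdd : ∀ τ ∈ s, ∀ x, |u τ x| ≤ M) (hv_bdd : ∀ τ ∈ s, ∀ x, |v τ x| ≤ N)
    (hderiv : ∀ τ ∈ s, ∀ x ∈ Ω,
      HasDerivAt (v · x) ((1 / ρ) * nonlocalOp (μ.restrict S) γ (u τ) x) τ) :
    HasDerivAt (fun τ => ∫ x in Ω, ρ * v τ x ^ 2 ∂μ)
      (2 * ∫ x in Ω, v t x * nonlocalOp (μ.restrict S) γ (u t) x ∂μ) t := by
  set κ := μ.restrict S
  have hΩκ : μ.restrict Ω ≤ κ := Measure.restrict_mono hΩS le_rfl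
  have hL : AEStronglyMeasurable (nonlocalOp κ γ (u t)) (μ.restrict Ω) :=
    ((((hu.comp measurable_snd).sub (hu.comp measurable_fst)).aestronglyMeasurable.mul
      hγ.1).integral_prod_right'.const_mul 2).mono_measure hΩκ
  have hγx : ∀ᵐ x ∂μ.restrict Ω, Integrable (γ x) κ :=
    ae_restrict_of_ae_restrict_of_subset hΩS hγ.prod_right_ae
  have hbound : Integrable (fun x => 4 * M * ∫ y, |γ x y| ∂κ) (μ.restrict Ω) :=
    (hγ.abs.integral_prod_left.mono_measure hΩκ).const_mul _
  have key := hasDerivAt_integral_sq_mul (a := v)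
    (a' := fun τ x => 1 / ρ * nonlocalOp κ γ (u τ) x) (g := fun _ => ρ) hs
    (fun τ => (hv τ).aestronglyMeasurable) (hL.const_mul _)
    (integrable_const ρ) hbound hv_bdd ?_ ?_
  · convert key using 1
    · funext τ
      congr 1 with x
      ring
    · rw [← integral_const_mul]
      congr 1 with x
      field_simp
  · filter_upwards [hγx] with x hx τ hτ
    rw [show 1 / ρ * nonlocalOp κ γ (u τ) x * ρ = nonlocalOp κ γ (u τ) x by field_simp]
    exact abs_nonlocalOp_le (hu_bdd τ hτ) hx
  · filter_upwards [ae_restrict_mem hΩ] with x hx τ hτ using hderiv τ hτ x hx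

theorem hasDerivAt_integral_integral_sq_sub_mul (hγ : Integrable (uncurry γ) (μ.prod μ))
    (hγsymm : ∀ x y, γ x y = γ y x) (hs : s ∈ 𝓝 t) (hu : ∀ τ, Measurable (u τ))
    (hv : Measurable (v t)) (hu_bdd : ∀ τ ∈ s, ∀ x, |u τ x| ≤ M)
    (hv_bdd : ∀ τ ∈ s, ∀ x, |v τ x| ≤ N) (hderiv : ∀ τ ∈ s, ∀ x, HasDerivAt (u · x) (v τ x) τ) :
    HasDerivAt (fun τ => ∫ x, ∫ y, (u τ y - u τ x) ^ 2 * γ x y ∂μ ∂μ)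
      (-2 * ∫ x, v t x * nonlocalOp μ γ (u t) x ∂μ) t := by
  have hdiff : ∀ {w : X → ℝ}, Measurable w →
      AEStronglyMeasurable (fun p : X × X => w p.2 - w p.1) (μ.prod μ) := fun hw =>
    ((hw.comp measurable_snd).sub (hw.comp measurable_fst)).aestronglyMeasurable
  have hdiff_bdd : ∀ {w : X → ℝ} {C : ℝ}, (∀ x, |w x| ≤ C) →
      ∀ p : X × X, |w p.2 - w p.1| ≤ 2 * C :=
    fun {w _} hw p => by linarith [abs_sub (w p.2) (w p.1), hw p.2, hw p.1]
  have hprod : (fun τ => ∫ x, ∫ y, (u τ y - u τ x) ^ 2 * γ x y ∂μ ∂μ) =ᶠ[𝓝 t]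
      fun τ => ∫ p, (u τ p.2 - u τ p.1) ^ 2 * γ p.1 p.2 ∂μ.prod μ := by
    filter_upwards [hs] with τ hτ
    refine integral_integral (hγ.bdd_mul ((hdiff (hu τ)).pow 2) (c := (2 * M) ^ 2) ?_)
    refine .of_forall fun p => ?_
    rw [norm_pow, Real.norm_eq_abs]
    exact pow_le_pow_left₀ (abs_nonneg _) (hdiff_bdd (hu_bdd τ hτ) p) 2
  have ht : t ∈ s := mem_of_mem_nhds hs
  have hgreen := integral_mul_nonlocalOp (w := v t) (u := u t) hγsymm <|
    (hγ.bdd_mul (hdiff (hu t)) (.of_forall (hdiff_bdd (hu_bdd t ht)))).bdd_mul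
      (hv.comp measurable_fst).aestronglyMeasurable (.of_forall fun p => hv_bdd t ht p.1)
  refine ((hasDerivAt_integral_sq_mul (a := fun τ p => u τ p.2 - u τ p.1)
    (a' := fun τ p => v τ p.2 - v τ p.1) (g := uncurry γ) hs (fun τ => hdiff (hu τ)) (hdiff hv) hγ
    (hγ.abs.const_mul (2 * N)) (fun τ hτ => hdiff_bdd (hu_bdd τ hτ)) ?_ ?_).congr_of_eventuallyEq
    hprod).congr_deriv ?_
  · refine .of_forall fun p τ hτ => ?_
    rw [abs_mul]
    exact mul_le_mul_of_nonneg_right (hdiff_bdd (hv_bdd τ hτ) p) (abs_nonneg _)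
  · exact .of_forall fun p τ hτ => (hderiv τ hτ p.2).sub (hderiv τ hτ p.1)
  · rw [hgreen, neg_mul_neg, ← integral_const_mul]
    congr 1 with p
    simp only [uncurry]
    ring

end

theorem nonlocal_wave_energy_conservation_general
    {d : ℕ} (Ω ΩI : Set (EuclideanSpace ℝ (Fin d)))
    (hΩ : MeasurableSet Ω) (hΩI : MeasurableSet ΩI)
    (hfin : volume (Ω ∪ ΩI) < ⊤)
    (γ : EuclideanSpace ℝ (Fin d) → EuclideanSpace ℝ (Fin d) → ℝ)
    (hγsymm : ∀ x y, γ x y = γ y x)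
    (hγint : IntegrableOn (fun p : EuclideanSpace ℝ (Fin d) × EuclideanSpace ℝ (Fin d) =>
      γ p.1 p.2) ((Ω ∪ ΩI) ×ˢ (Ω ∪ ΩI)))
    (ρ T : ℝ) (hρ : 0 < ρ)
    (u v : ℝ → EuclideanSpace ℝ (Fin d) → ℝ)
    (humeas : ∀ t, Measurable (u t)) (hvmeas : ∀ t, Measurable (v t))
    (hubdd : ∃ M, ∀ t ∈ Set.Icc (0:ℝ) T, ∀ x, |u t x| ≤ M)
    (hvbdd : ∃ M, ∀ t ∈ Set.Icc (0:ℝ) T, ∀ x, |v t x| ≤ M)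
    (huI : ∀ t ∈ Set.Icc (0:ℝ) T, ∀ x ∈ ΩI, u t x = 0)
    (hvel : ∀ t ∈ Set.Ioo (0:ℝ) T, ∀ x, HasDerivAt (fun τ => u τ x) (v t x) t)
    (heq : ∀ t ∈ Set.Ioo (0:ℝ) T, ∀ x ∈ Ω,
      HasDerivAt (fun τ => v τ x)
        ((1/ρ) * (2 * ∫ y in Ω ∪ ΩI, (u t y - u t x) * γ x y)) t) :
    ∀ t ∈ Set.Ioo (0:ℝ) T,
      HasDerivAt
        (fun τ => (1/2) * (∫ x in Ω, ρ * (v τ x) ^ 2)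
          + (1/2) * ∫ x in Ω ∪ ΩI, ∫ y in Ω ∪ ΩI, (u τ y - u τ x) ^ 2 * γ x y)
        0 t := by
  intro t ht
  obtain ⟨M, hM⟩ := hubdd
  obtain ⟨N, hN⟩ := hvbdd
  have hIoo : Ioo (0:ℝ) T ∈ 𝓝 t := Ioo_mem_nhds ht.1 ht.2
  have hΩS : Ω ⊆ Ω ∪ ΩI := subset_union_left
  have : IsFiniteMeasure (volume.restrict Ω) :=
    ⟨by simpa using (measure_mono hΩS).trans_lt hfin⟩
  have hγ : Integrable (uncurry γ)
      ((volume.restrict (Ω ∪ ΩI)).prod (volume.restrict (Ω ∪ ΩI))) := by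
    rwa [Measure.prod_restrict]
  have hu_bdd := fun τ hτ => hM τ (Ioo_subset_Icc_self hτ)
  have hv_bdd := fun τ hτ => hN τ (Ioo_subset_Icc_self hτ)
  have kinetic := hasDerivAt_setIntegral_mul_sq hΩ hΩS hγ hρ.ne' hIoo (humeas t) hvmeas hu_bdd
    hv_bdd heq
  have potential := hasDerivAt_integral_integral_sq_sub_mul hγ hγsymm hIoo humeas (hvmeas t)
    hu_bdd hv_bdd hvel
  have hvI : ∀ x ∈ ΩI, v t x = 0 := fun x hx =>
    (hvel t ht x).unique <| (hasDerivAt_const t 0).congr_of_eventuallyEq <|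
      eventually_of_mem hIoo fun τ hτ => huI τ (Ioo_subset_Icc_self hτ) x hx
  have hrestrict := setIntegral_eq_of_subset_of_forall_sdiff_eq_zero (μ := volume)
    (f := fun x => v t x * nonlocalOp (volume.restrict (Ω ∪ ΩI)) γ (u t) x) (hΩ.union hΩI) hΩS
    fun x hx => by rw [hvI x (hx.1.resolve_left hx.2), zero_mul]
  refine ((kinetic.const_mul (1 / 2)).add (potential.const_mul (1 / 2))).congr_deriv ?_
  rw [hrestrict]
  ring

/-- Energy conservation for the homogeneous nonlocal wave equation
`ρ ∂²_t u = L_δ u` with homogeneous volume constraint: the total energy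
`E(t) = (1/2)∫_Ω ρ (∂_t u)² + (1/2)∫∫ (u(y,t)-u(x,t))² γ(x,y)` satisfies `E'(t) = 0`. -/
theorem nonlocal_wave_energy_conservation
    {d : ℕ} (Ω ΩI : Set (EuclideanSpace ℝ (Fin d)))
    (hΩ : MeasurableSet Ω) (hΩI : MeasurableSet ΩI)
    (hdisj : Disjoint Ω ΩI)
    (hfin : volume (Ω ∪ ΩI) < ⊤)
    (γ : EuclideanSpace ℝ (Fin d) → EuclideanSpace ℝ (Fin d) → ℝ)
    (hγmeas : Measurable (Function.uncurry γ))
    (hγnonneg : ∀ x y, 0 ≤ γ x y)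
    (hγsymm : ∀ x y, γ x y = γ y x)
    (hγbdd : ∃ K, ∀ x, (∫ y in Ω ∪ ΩI, γ x y) ≤ K)
    (hγint : IntegrableOn (fun p : EuclideanSpace ℝ (Fin d) × EuclideanSpace ℝ (Fin d) =>
      γ p.1 p.2) ((Ω ∪ ΩI) ×ˢ (Ω ∪ ΩI)))
    (ρ T : ℝ) (hρ : 0 < ρ) (hT : 0 < T)
    (u v : ℝ → EuclideanSpace ℝ (Fin d) → ℝ)
    (humeas : ∀ t, Measurable (u t)) (hvmeas : ∀ t, Measurable (v t))
    (hubdd : ∃ M, ∀ t ∈ Set.Icc (0:ℝ) T, ∀ x, |u t x| ≤ M)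
    (hvbdd : ∃ M, ∀ t ∈ Set.Icc (0:ℝ) T, ∀ x, |v t x| ≤ M)
    (hvcont : ∀ x, ContinuousOn (fun τ => v τ x) (Set.Icc 0 T))
    (huI : ∀ t ∈ Set.Icc (0:ℝ) T, ∀ x ∈ ΩI, u t x = 0)
    (hvel : ∀ t ∈ Set.Ioo (0:ℝ) T, ∀ x, HasDerivAt (fun τ => u τ x) (v t x) t)
    (heq : ∀ t ∈ Set.Ioo (0:ℝ) T, ∀ x ∈ Ω,
      HasDerivAt (fun τ => v τ x)
        ((1/ρ) * (2 * ∫ y in Ω ∪ ΩI, (u t y - u t x) * γ x y)) t) :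
    ∀ t ∈ Set.Ioo (0:ℝ) T,
      HasDerivAt
        (fun τ => (1/2) * (∫ x in Ω, ρ * (v τ x) ^ 2)
          + (1/2) * ∫ x in Ω ∪ ΩI, ∫ y in Ω ∪ ΩI, (u τ y - u τ x) ^ 2 * γ x y)
        0 t :=
  nonlocal_wave_energy_conservation_general Ω ΩI hΩ hΩI hfin γ hγsymm hγint ρ T hρ u v humeas hvmeas
    hubdd hvbdd huI hvel heq
end
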